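/- arXiv:2001.10123 — 4 statements merged into one kernel-verified Lean document; each statement's English description precedes it below -/
import Mathlib

section
/- Let F, G : A ⇉ B be two functors between small categories. Then there exists a small category C, a functor P : B → C, and a natural transformation α : P ∘ F → P ∘ G which is a 2-categorical (strict) coinserter: for every small category T, the functor sending K : C → T to the pair (K ∘ P, K ∘ α) is an isomorphism between the category of functors C → T and the category whose objects are pairs (H : B → T, γ : H ∘ F → H ∘ G) and whose morphisms (H, γ) → (H', γ') are natural transformations θ : H → H' with (θ ∘ G) ∘ γ = γ' ∘ (θ ∘ F). -/
/-!
The coinserter is the free category on the quiver of `B` with an extra edge `F a ⟶ G a` for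
each `a : A`, modulo the functoriality of `B` and the naturality of these edges. A pair
`(H, γ)` interprets edges by `H.map` and `γ.app`, hence paths by composition; the relations hold
in `T` exactly because `H` is a functor and `γ` is natural, so `(H, γ)` descends to the quotient.
Morphisms `θ` of pairs commute with the interpretation of every edge (for the new edges this is
the compatibility of `θ` with the 2-cells), hence of every path. Restricting the descended functor
along `(P, α)` returns `(H, γ)` on the nose, and a functor out of the quotient is determined by
its values on edges, so the two constructions are mutually inverse.
-/

open CategoryTheory

universe u

variable {A B : Type u} [SmallCategory A] [SmallCategory B]

/-- The category of pairs `(H : B ⥤ T, γ : F ⋙ H ⟶ G ⋙ H)`. -/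
structure CoinserterData (F G : A ⥤ B) (T : Type u) [SmallCategory T] where
  H : B ⥤ T
  γ : F ⋙ H ⟶ G ⋙ H

namespace CoinserterData

variable {F G : A ⥤ B} {T : Type u} [SmallCategory T]

/-- Morphisms of coinserter data: natural transformations compatible with the 2-cells. -/
@[ext]
structure Hom (X Y : CoinserterData F G T) where
  θ : X.H ⟶ Y.H
  comm : X.γ ≫ Functor.whiskerLeft G θ = Functor.whiskerLeft F θ ≫ Y.γ

instance : Category (CoinserterData F G T) where
  Hom X Y := Hom X Y
  id X := ⟨𝟙 X.H, by simp⟩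
  comp f g :=
    ⟨f.θ ≫ g.θ, by
      rw [Functor.whiskerLeft_comp, Functor.whiskerLeft_comp, ← Category.assoc, f.comm, Category.assoc,
        g.comm, ← Category.assoc]⟩
  id_comp f := by apply Hom.ext; simp
  comp_id f := by apply Hom.ext; simp
  assoc f g h := by apply Hom.ext; simp

@[simp]
lemma id_θ (X : CoinserterData F G T) : Hom.θ (𝟙 X) = 𝟙 X.H := rfl

@[simp]
lemma comp_θ {X Y Z : CoinserterData F G T} (f : X ⟶ Y) (g : Y ⟶ Z) :
    Hom.θ (f ≫ g) = f.θ ≫ g.θ := rfl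

end CoinserterData

/-- Precomposition with `(P, α)`, sending `K : C ⥤ T` to `(P ⋙ K, whiskerRight α K)`. -/
@[simps]
def coinserterCompare {C : Type u} [SmallCategory C] (F G : A ⥤ B) (P : B ⥤ C)
    (α : F ⋙ P ⟶ G ⋙ P) (T : Type u) [SmallCategory T] :
    (C ⥤ T) ⥤ CoinserterData F G T where
  obj K := ⟨P ⋙ K, Functor.whiskerRight α K⟩
  map {K L} θ :=
    ⟨Functor.whiskerLeft P θ, by
      ext X
      simpa using θ.naturality (α.app X)⟩
  map_id K := by apply CoinserterData.Hom.ext; simp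
  map_comp f g := by apply CoinserterData.Hom.ext; simp

namespace Coinserter

/-- A copy of the objects of `B`, so that the generating quiver does not clash with the
category structure of `B`. -/
structure Vertex (F G : A ⥤ B) : Type u where
  as : B

inductive Edge (F G : A ⥤ B) : Vertex F G → Vertex F G → Type u
  | of {X Y : B} : (X ⟶ Y) → Edge F G ⟨X⟩ ⟨Y⟩
  | α (a : A) : Edge F G ⟨F.obj a⟩ ⟨G.obj a⟩

variable {F G : A ⥤ B}

instance : Quiver.{u} (Vertex F G) where
  Hom := Edge F G

abbrev Edge.toPath {X Y : Vertex F G} (e : Edge F G X Y) :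
    (Paths.of (Vertex F G)).obj X ⟶ (Paths.of (Vertex F G)).obj Y :=
  (Paths.of (Vertex F G)).map e

variable (F G) in
inductive Rel : HomRel (Paths (Vertex F G))
  | id (X : B) : Rel (Edge.of (𝟙 X)).toPath Quiver.Path.nil
  | comp {X Y Z : B} (f : X ⟶ Y) (g : Y ⟶ Z) :
      Rel ((Edge.of f).toPath ≫ (Edge.of g).toPath) (Edge.of (f ≫ g)).toPath
  | naturality {a a' : A} (f : a ⟶ a') :
      Rel ((Edge.of (F.map f)).toPath ≫ (Edge.α a').toPath)
        ((Edge.α a).toPath ≫ (Edge.of (G.map f)).toPath)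

end Coinserter

abbrev Coinserter (F G : A ⥤ B) : Type u := CategoryTheory.Quotient (Coinserter.Rel F G)

namespace Coinserter

variable (F G : A ⥤ B)

def proj : B ⥤ Coinserter F G where
  obj X := ⟨⟨X⟩⟩
  map f := Quot.mk _ (Edge.of f).toPath
  map_id X := CategoryTheory.Quotient.sound _ (Rel.id X)
  map_comp f g := (CategoryTheory.Quotient.sound _ (Rel.comp f g)).symm

def α : F ⋙ proj F G ⟶ G ⋙ proj F G where
  app a := Quot.mk _ (Edge.α a).toPath
  naturality _ _ f := CategoryTheory.Quotient.sound _ (Rel.naturality f)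

variable {F G} {T : Type u} [SmallCategory T]

def edgeMap (D : CoinserterData F G T) :
    ∀ {X Y : Vertex F G}, Edge F G X Y → (D.H.obj X.as ⟶ D.H.obj Y.as)
  | _, _, .of f => D.H.map f
  | _, _, .α a => D.γ.app a

/-- A path of length one is sent to its edge on the nose, not to `𝟙 ≫ edgeMap D e`: this makes
`descFunctor ⋙ coinserterCompare = 𝟭` hold by `rfl`. -/
def pathMap (D : CoinserterData F G T) {X : Vertex F G} :
    ∀ {Y : Vertex F G}, Quiver.Path X Y → (D.H.obj X.as ⟶ D.H.obj Y.as)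
  | _, .nil => 𝟙 _
  | _, .cons .nil e => edgeMap D e
  | _, .cons (.cons p e') e => pathMap D (p.cons e') ≫ edgeMap D e

lemma pathMap_cons (D : CoinserterData F G T) {X Y Z : Vertex F G}
    (p : Quiver.Path X Y) (e : Y ⟶ Z) :
    pathMap D (p.cons e) = pathMap D p ≫ edgeMap D e := by
  cases p with
  | nil => exact (Category.id_comp (edgeMap D e)).symm
  | cons p f => rw [pathMap]

lemma pathMap_comp (D : CoinserterData F G T) {X Y Z : Vertex F G}
    (p : Quiver.Path X Y) (q : Quiver.Path Y Z) :
    pathMap D (p.comp q) = pathMap D p ≫ pathMap D q := by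
  induction q with
  | nil => exact (Category.comp_id (pathMap D p)).symm
  | cons q e ih => rw [Quiver.Path.comp_cons, pathMap_cons, pathMap_cons, ih, Category.assoc]

def pathsDesc (D : CoinserterData F G T) : Paths (Vertex F G) ⥤ T where
  obj X := D.H.obj X.as
  map := pathMap D
  map_id _ := rfl
  map_comp := pathMap_comp D

lemma pathsDesc_map_eq_of_rel (D : CoinserterData F G T) {X Y : Paths (Vertex F G)}
    {p q : X ⟶ Y} (h : Rel F G p q) : (pathsDesc D).map p = (pathsDesc D).map q := by
  induction h with
  | id X => exact D.H.map_id X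
  | comp f g => exact (D.H.map_comp f g).symm
  | naturality f => exact D.γ.naturality f

def desc (D : CoinserterData F G T) : Coinserter F G ⥤ T :=
  CategoryTheory.Quotient.lift _ (pathsDesc D) fun _ _ _ _ => pathsDesc_map_eq_of_rel D

lemma edgeMap_naturality {D D' : CoinserterData F G T} (f : D ⟶ D') {X Y : Vertex F G}
    (e : Edge F G X Y) : edgeMap D e ≫ f.θ.app Y.as = f.θ.app X.as ≫ edgeMap D' e := by
  cases e with
  | of g => exact f.θ.naturality g
  | α a => exact NatTrans.congr_app f.comm a

lemma pathMap_naturality {D D' : CoinserterData F G T} (f : D ⟶ D') {X Y : Vertex F G}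
    (p : Quiver.Path X Y) : pathMap D p ≫ f.θ.app Y.as = f.θ.app X.as ≫ pathMap D' p := by
  induction p with
  | nil => exact (Category.id_comp _).trans (Category.comp_id _).symm
  | cons p e ih =>
    rw [pathMap_cons, pathMap_cons, Category.assoc, edgeMap_naturality, ← Category.assoc, ih,
      Category.assoc]

variable (F G T) in
def descFunctor : CoinserterData F G T ⥤ (Coinserter F G ⥤ T) where
  obj := desc
  map f := CategoryTheory.Quotient.natTransLift _
    { app X := f.θ.app X.as
      naturality _ _ := pathMap_naturality f }

lemma edgeMap_coinserterCompare_obj (K : Coinserter F G ⥤ T) {X Y : Vertex F G} (e : Edge F G X Y) :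
    edgeMap ((coinserterCompare F G (proj F G) (α F G) T).obj K) e =
      K.map (Quot.mk _ e.toPath) := by
  cases e <;> rfl

lemma desc_coinserterCompare_obj (K : Coinserter F G ⥤ T) :
    desc ((coinserterCompare F G (proj F G) (α F G) T).obj K) = K := by
  refine CategoryTheory.Quotient.lift_unique' _ _ _ (Paths.ext_functor rfl fun _ _ e => ?_)
  show _ = 𝟙 _ ≫ _ ≫ 𝟙 _
  exact ((edgeMap_coinserterCompare_obj K e).trans (Category.comp_id _).symm).trans (Category.id_comp _).symm

lemma descFunctor_comp_coinserterCompare :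
    descFunctor F G T ⋙ coinserterCompare F G (proj F G) (α F G) T = 𝟭 _ :=
  rfl

lemma descFunctor_map_coinserterCompare_map {K L : Coinserter F G ⥤ T} (θ : K ⟶ L) :
    (descFunctor F G T).map ((coinserterCompare F G (proj F G) (α F G) T).map θ) =
      eqToHom (desc_coinserterCompare_obj K) ≫ θ ≫ eqToHom (desc_coinserterCompare_obj L).symm := by
  ext X
  rw [NatTrans.comp_app, NatTrans.comp_app, eqToHom_app, eqToHom_app]
  exact ((Category.comp_id _).symm.trans (Category.id_comp _).symm)

lemma coinserterCompare_comp_descFunctor :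
    coinserterCompare F G (proj F G) (α F G) T ⋙ descFunctor F G T = 𝟭 _ :=
  CategoryTheory.Functor.ext desc_coinserterCompare_obj fun _ _ => descFunctor_map_coinserterCompare_map

end Coinserter

/-- existence of strict coinserters in the 2-category of small categories;
the universal property is an isomorphism of categories, expressed by a strictly inverse
functor. -/
theorem exists_strict_coinserter_in_Cat (F G : A ⥤ B) :
    ∃ (C : Cat.{u, u}) (P : B ⥤ C) (α : F ⋙ P ⟶ G ⋙ P),
      ∀ T : Cat.{u, u}, ∃ Ψ : CoinserterData F G T ⥤ (↑C ⥤ ↑T),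
        coinserterCompare F G P α T ⋙ Ψ = 𝟭 (↑C ⥤ ↑T) ∧
        Ψ ⋙ coinserterCompare F G P α T = 𝟭 (CoinserterData F G ↑T) :=
  ⟨Cat.of (Coinserter F G), Coinserter.proj F G, Coinserter.α F G, fun _ =>
    ⟨Coinserter.descFunctor F G _, Coinserter.coinserterCompare_comp_descFunctor,
      Coinserter.descFunctor_comp_coinserterCompare⟩⟩
end

section
/- In any bicategory with binary bicategorical coproducts and bicategorical coequalizers, bicategorical pushouts exist. Specifically, given f : C → A and g : C → B, the bicategorical pushout of f and g is given by the bicategorical coequalizer of ι_A ∘ f : C → A ⊔ B and ι_B ∘ g : C → A ⊔ B, where A ⊔ B is the bicategorical coproduct with coprojections ι_A, ι_B. -/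
open CategoryTheory Bicategory

universe w v u

variable {B : Type u} [Bicategory.{w, v} B]

/-- `(s, ia, ib)` is a bicategorical coproduct of `a` and `b`: for every `t`,
precomposition induces an equivalence `Hom(s,t) ≃ Hom(a,t) × Hom(b,t)`. -/
def IsBicatCoproduct {a b s : B} (ia : a ⟶ s) (ib : b ⟶ s) : Prop :=
  ∀ t : B,
    (∀ (u : a ⟶ t) (v : b ⟶ t),
      ∃ k : s ⟶ t, Nonempty (ia ≫ k ≅ u) ∧ Nonempty (ib ≫ k ≅ v)) ∧
    (∀ (k l : s ⟶ t) (θu : ia ≫ k ⟶ ia ≫ l) (θv : ib ≫ k ⟶ ib ≫ l),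
      ∃! θ : k ⟶ l, ia ◁ θ = θu ∧ ib ◁ θ = θv)

/-- `(p, w)` is a bicategorical coequalizer of `f, g : a ⟶ b`: for every `t`,
precomposition induces an equivalence between `Hom(c,t)` and pairs
`(q : b ⟶ t, β : f ≫ q ≅ g ≫ q)`. -/
def IsBicatCoequalizer {a b c : B} (f g : a ⟶ b) (p : b ⟶ c) (w : f ≫ p ≅ g ≫ p) : Prop :=
  ∀ t : B,
    (∀ (q : b ⟶ t) (β : f ≫ q ≅ g ≫ q),
      ∃ (k : c ⟶ t) (e : p ≫ k ≅ q),
        β.hom = f ◁ e.inv ≫ (α_ f p k).inv ≫ w.hom ▷ k ≫ (α_ g p k).hom ≫ g ◁ e.hom) ∧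
    (∀ (k l : c ⟶ t) (θ : p ≫ k ⟶ p ≫ l),
      ((α_ f p k).inv ≫ w.hom ▷ k ≫ (α_ g p k).hom) ≫ g ◁ θ =
        f ◁ θ ≫ ((α_ f p l).inv ≫ w.hom ▷ l ≫ (α_ g p l).hom) →
      ∃! π : k ⟶ l, p ◁ π = θ)

/-- `(ia, ib, w)` is a bicategorical pushout of `f : c ⟶ a` and `g : c ⟶ b`: for every
`t`, precomposition induces an equivalence between `Hom(s,t)` and the bicategorical
pullback `Hom(a,t) ×_{Hom(c,t)} Hom(b,t)`, whose objects are triples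
`(u, v, β : f ≫ u ≅ g ≫ v)`. -/
def IsBicatPushout {a b c s : B} (f : c ⟶ a) (g : c ⟶ b) (ia : a ⟶ s) (ib : b ⟶ s)
    (w : f ≫ ia ≅ g ≫ ib) : Prop :=
  ∀ t : B,
    (∀ (u : a ⟶ t) (v : b ⟶ t) (β : f ≫ u ≅ g ≫ v),
      ∃ (k : s ⟶ t) (eu : ia ≫ k ≅ u) (ev : ib ≫ k ≅ v),
        β.hom = f ◁ eu.inv ≫ (α_ f ia k).inv ≫ w.hom ▷ k ≫ (α_ g ib k).hom ≫ g ◁ ev.hom) ∧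
    (∀ (k l : s ⟶ t) (θu : ia ≫ k ⟶ ia ≫ l) (θv : ib ≫ k ⟶ ib ≫ l),
      ((α_ f ia k).inv ≫ w.hom ▷ k ≫ (α_ g ib k).hom) ≫ g ◁ θv =
        f ◁ θu ≫ ((α_ f ia l).inv ≫ w.hom ▷ l ≫ (α_ g ib l).hom) →
      ∃! θ : k ⟶ l, ia ◁ θ = θu ∧ ib ◁ θ = θv)

/-!
A 1-cell out of the coequalizer `q` is a 1-cell `m` out of the coproduct together with an
invertible 2-cell `(f ≫ ia) ≫ m ≅ (g ≫ ib) ≫ m`. A 1-cell `m` out of the coproduct is a pair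
`(u, v) = (ia ≫ m, ib ≫ m)` up to isomorphism, and after reassociating, such a 2-cell is the same
as `β : f ≫ u ≅ g ≫ v`. Composing the two universal properties gives that of the pushout; both
halves (lifting cocones, and lifting 2-cells uniquely) only need associator bookkeeping on top.
-/

section CoequalizerOfCoproduct

variable {a b c s q t : B} {f : c ⟶ a} {g : c ⟶ b} {ia : a ⟶ s} {ib : b ⟶ s} {p : s ⟶ q}
  {w : (f ≫ ia) ≫ p ≅ (g ≫ ib) ≫ p}

theorem pushout_cocone_eq_of_coequalizer_cocone_eq {m : s ⟶ t} {k : q ⟶ t} {u : a ⟶ t}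
    {v : b ⟶ t} (β : f ≫ u ≅ g ≫ v) (eu : ia ≫ m ≅ u) (ev : ib ≫ m ≅ v) (e : p ≫ k ≅ m)
    (he : (α_ f ia m).hom ≫ f ◁ eu.hom ≫ β.hom ≫ g ◁ ev.inv ≫ (α_ g ib m).inv =
      (f ≫ ia) ◁ e.inv ≫ (α_ (f ≫ ia) p k).inv ≫ w.hom ▷ k ≫ (α_ (g ≫ ib) p k).hom ≫
        (g ≫ ib) ◁ e.hom) :
    β.hom = f ◁ (α_ ia p k ≪≫ whiskerLeftIso ia e ≪≫ eu).inv ≫ (α_ f (ia ≫ p) k).inv ≫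
      ((α_ f ia p).symm ≪≫ w ≪≫ α_ g ib p).hom ▷ k ≫ (α_ g (ib ≫ p) k).hom ≫
        g ◁ (α_ ib p k ≪≫ whiskerLeftIso ib e ≪≫ ev).hom :=
  calc β.hom
      = f ◁ eu.inv ≫ (α_ f ia m).inv ≫
          ((α_ f ia m).hom ≫ f ◁ eu.hom ≫ β.hom ≫ g ◁ ev.inv ≫ (α_ g ib m).inv) ≫
          (α_ g ib m).hom ≫ g ◁ ev.hom := by
        simp [← whiskerLeft_comp]
    _ = _ := by
        rw [he]
        simp only [Iso.trans_hom, Iso.trans_inv, Iso.symm_hom, whiskerLeftIso_hom,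
          whiskerLeftIso_inv]
        bicategory

theorem coequalizer_compat_of_pushout_compat {k l : q ⟶ t}
    {θu : (ia ≫ p) ≫ k ⟶ (ia ≫ p) ≫ l} {θv : (ib ≫ p) ≫ k ⟶ (ib ≫ p) ≫ l}
    {θ : p ≫ k ⟶ p ≫ l} (hu : ia ◁ θ = (α_ ia p k).inv ≫ θu ≫ (α_ ia p l).hom)
    (hv : ib ◁ θ = (α_ ib p k).inv ≫ θv ≫ (α_ ib p l).hom)
    (h : ((α_ f (ia ≫ p) k).inv ≫ ((α_ f ia p).symm ≪≫ w ≪≫ α_ g ib p).hom ▷ k ≫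
        (α_ g (ib ≫ p) k).hom) ≫ g ◁ θv =
      f ◁ θu ≫ ((α_ f (ia ≫ p) l).inv ≫ ((α_ f ia p).symm ≪≫ w ≪≫ α_ g ib p).hom ▷ l ≫
        (α_ g (ib ≫ p) l).hom)) :
    ((α_ (f ≫ ia) p k).inv ≫ w.hom ▷ k ≫ (α_ (g ≫ ib) p k).hom) ≫ (g ≫ ib) ◁ θ =
      (f ≫ ia) ◁ θ ≫ ((α_ (f ≫ ia) p l).inv ≫ w.hom ▷ l ≫ (α_ (g ≫ ib) p l).hom) := by
  simp only [Iso.trans_hom, Iso.symm_hom, comp_whiskerRight, Category.assoc] at h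
  rw [comp_whiskerLeft, comp_whiskerLeft, hu, hv]
  calc _ = ((α_ f ia (p ≫ k)).hom ≫ f ◁ (α_ ia p k).inv) ≫
          ((α_ f (ia ≫ p) k).inv ≫ (α_ f ia p).inv ▷ k ≫ w.hom ▷ k ≫
            (α_ g ib p).hom ▷ k ≫ (α_ g (ib ≫ p) k).hom ≫ g ◁ θv) ≫
          (g ◁ (α_ ib p l).hom ≫ (α_ g ib (p ≫ l)).inv) := by
        bicategory
    _ = _ := by
        rw [h]
        bicategory

theorem exists_pushout_lift_of_coproduct_of_coequalizer (hcop : IsBicatCoproduct ia ib)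
    (hce : IsBicatCoequalizer (f ≫ ia) (g ≫ ib) p w) (u : a ⟶ t) (v : b ⟶ t)
    (β : f ≫ u ≅ g ≫ v) :
    ∃ (k : q ⟶ t) (eu : (ia ≫ p) ≫ k ≅ u) (ev : (ib ≫ p) ≫ k ≅ v),
      β.hom = f ◁ eu.inv ≫ (α_ f (ia ≫ p) k).inv ≫
        ((α_ f ia p).symm ≪≫ w ≪≫ α_ g ib p).hom ▷ k ≫ (α_ g (ib ≫ p) k).hom ≫
          g ◁ ev.hom := by
  obtain ⟨m, ⟨eu⟩, ⟨ev⟩⟩ := (hcop t).1 u v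
  obtain ⟨k, e, he⟩ := (hce t).1 m
    (α_ f ia m ≪≫ whiskerLeftIso f eu ≪≫ β ≪≫ (whiskerLeftIso g ev).symm ≪≫ (α_ g ib m).symm)
  simp only [Iso.trans_hom, Iso.symm_hom, whiskerLeftIso_hom, whiskerLeftIso_inv] at he
  exact ⟨k, _, _, pushout_cocone_eq_of_coequalizer_cocone_eq β eu ev e he⟩

theorem existsUnique_pushout_twoCell_of_coproduct_of_coequalizer
    (hcop : IsBicatCoproduct ia ib) (hce : IsBicatCoequalizer (f ≫ ia) (g ≫ ib) p w)
    (k l : q ⟶ t) (θu : (ia ≫ p) ≫ k ⟶ (ia ≫ p) ≫ l) (θv : (ib ≫ p) ≫ k ⟶ (ib ≫ p) ≫ l)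
    (h : ((α_ f (ia ≫ p) k).inv ≫ ((α_ f ia p).symm ≪≫ w ≪≫ α_ g ib p).hom ▷ k ≫
        (α_ g (ib ≫ p) k).hom) ≫ g ◁ θv =
      f ◁ θu ≫ ((α_ f (ia ≫ p) l).inv ≫ ((α_ f ia p).symm ≪≫ w ≪≫ α_ g ib p).hom ▷ l ≫
        (α_ g (ib ≫ p) l).hom)) :
    ∃! π : k ⟶ l, (ia ≫ p) ◁ π = θu ∧ (ib ≫ p) ◁ π = θv := by
  obtain ⟨θ, ⟨hu, hv⟩, hθ_unique⟩ := (hcop t).2 (p ≫ k) (p ≫ l)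
    ((α_ ia p k).inv ≫ θu ≫ (α_ ia p l).hom) ((α_ ib p k).inv ≫ θv ≫ (α_ ib p l).hom)
  obtain ⟨π, hπ, hπ_unique⟩ :=
    (hce t).2 k l θ (coequalizer_compat_of_pushout_compat hu hv h)
  refine ⟨π, ⟨?_, ?_⟩, fun π' ⟨hπu, hπv⟩ => hπ_unique π' (hθ_unique (p ◁ π') ⟨?_, ?_⟩)⟩
  · simp [hπ, hu]
  · simp [hπ, hv]
  · simp [← hπu]
  · simp [← hπv]

theorem isBicatPushout_of_isBicatCoproduct_of_isBicatCoequalizer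
    (hcop : IsBicatCoproduct ia ib) (hce : IsBicatCoequalizer (f ≫ ia) (g ≫ ib) p w) :
    IsBicatPushout f g (ia ≫ p) (ib ≫ p) ((α_ f ia p).symm ≪≫ w ≪≫ α_ g ib p) := fun _ =>
  ⟨exists_pushout_lift_of_coproduct_of_coequalizer hcop hce,
    existsUnique_pushout_twoCell_of_coproduct_of_coequalizer hcop hce⟩

end CoequalizerOfCoproduct

/-- a bicategory with binary bicategorical coproducts and bicategorical
coequalizers has bicategorical pushouts; specifically, the pushout of `f, g` is the
coequalizer of `f ≫ ι_a` and `g ≫ ι_b` into the coproduct. -/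
theorem bicat_pushout_of_coproducts_and_coequalizers
    (hcoprod : ∀ a b : B, ∃ (s : B) (ia : a ⟶ s) (ib : b ⟶ s), IsBicatCoproduct ia ib)
    (hcoeq : ∀ {x y : B} (f g : x ⟶ y),
      ∃ (c : B) (p : y ⟶ c) (w : f ≫ p ≅ g ≫ p), IsBicatCoequalizer f g p w) :
    -- bicategorical pushouts exist:
    (∀ {a b c : B} (f : c ⟶ a) (g : c ⟶ b),
      ∃ (s : B) (ia : a ⟶ s) (ib : b ⟶ s) (w : f ≫ ia ≅ g ≫ ib),
        IsBicatPushout f g ia ib w) ∧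
    -- specifically, they are given by coequalizers of the coproduct inclusions:
    (∀ {a b c s q : B} (f : c ⟶ a) (g : c ⟶ b) (ia : a ⟶ s) (ib : b ⟶ s)
      (p : s ⟶ q) (w : (f ≫ ia) ≫ p ≅ (g ≫ ib) ≫ p),
      IsBicatCoproduct ia ib → IsBicatCoequalizer (f ≫ ia) (g ≫ ib) p w →
      IsBicatPushout f g (ia ≫ p) (ib ≫ p)
        ((α_ f ia p).symm ≪≫ w ≪≫ α_ g ib p)) := by
  refine ⟨fun f g => ?_,
    fun _ _ _ _ _ _ => isBicatPushout_of_isBicatCoproduct_of_isBicatCoequalizer⟩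
  obtain ⟨s, ia, ib, hcop⟩ := hcoprod _ _
  obtain ⟨q, p, w, hce⟩ := hcoeq (f ≫ ia) (g ≫ ib)
  exact ⟨q, ia ≫ p, ib ≫ p, _, isBicatPushout_of_isBicatCoproduct_of_isBicatCoequalizer hcop hce⟩
end

section
/- In any bicategory with binary bicategorical coproducts and bicategorical pushouts, bicategorical coequalizers exist. Specifically, the bicategorical coequalizer of a parallel pair f, g : A ⇉ B is given by the bicategorical pushout of the morphism (f, g) : A ⊔ A → B induced by f and g, and the codiagonal morphism ∇ : A ⊔ A → A induced by the identity on both copies. -/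
/-!
Write `k = (f,g)`, `r = ∇` and `(u, w, ω : k ≫ u ≅ r ≫ w)` for the pushout. Restricting `ω`
along the coprojections `i₁, i₂` (using `iⱼ ≫ r ≅ 𝟙` and `i₁ ≫ k ≅ f`, `i₂ ≫ k ≅ g`) gives
2-isos `f ≫ u ≅ w ≅ g ≫ u`, the coequalizing 2-cell. A coequalizing pair `(q, β)` becomes a
pushout cocone `(q, f ≫ q, k ≫ q ≅ r ≫ f ≫ q)` by gluing over the coproduct the identity on the
first summand with `β⁻¹` on the second; a 2-cell `u ≫ x ⟶ u ≫ y` compatible with the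
coequalizing 2-cell extends to a compatible pair on `u` and `w` in the same way. Both steps rest
on the fact that, after whiskering with a coprojection, compatibility with `ω` becomes
compatibility with its restriction, and the coprojections jointly detect 2-cells.
-/

open CategoryTheory Bicategory

universe w v u

variable {B : Type u} [Bicategory.{w, v} B]

section AssocWhiskerRight

variable {a b c d t : B} {f : a ⟶ b} {u : b ⟶ d} {g : a ⟶ c} {v : c ⟶ d}

def assocWhiskerRight (ω : f ≫ u ≅ g ≫ v) (X : d ⟶ t) : f ≫ u ≫ X ≅ g ≫ v ≫ X :=
  (α_ f u X).symm ≪≫ whiskerRightIso ω X ≪≫ α_ g v X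

@[simp]
theorem assocWhiskerRight_hom (ω : f ≫ u ≅ g ≫ v) (X : d ⟶ t) :
    (assocWhiskerRight ω X).hom = (α_ f u X).inv ≫ ω.hom ▷ X ≫ (α_ g v X).hom :=
  rfl

end AssocWhiskerRight

theorem whiskerLeft_whiskerLeft_eq_conj {a s b t : B} {i : a ⟶ s} {k : s ⟶ b} {f : a ⟶ b}
    (ef : i ≫ k ≅ f) {Z Z' : b ⟶ t} (θ : Z ⟶ Z') :
    i ◁ k ◁ θ = (α_ i k Z).inv ≫ ef.hom ▷ Z ≫ f ◁ θ ≫ ef.inv ▷ Z' ≫ (α_ i k Z').hom := by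
  rw [← whisker_exchange_assoc]
  simp

section Restrict

variable {a s b t : B} {i : a ⟶ s} {r : s ⟶ a} {k : s ⟶ b} {f : a ⟶ b}
  (ec : i ≫ r ≅ 𝟙 a) (ef : i ≫ k ≅ f)

def restrictIso {Z : b ⟶ t} {Y : a ⟶ t} (ρ : k ≫ Z ≅ r ≫ Y) : f ≫ Z ≅ Y :=
  whiskerRightIso ef.symm Z ≪≫ α_ i k Z ≪≫ whiskerLeftIso i ρ ≪≫ (α_ i r Y).symm ≪≫
    whiskerRightIso ec Y ≪≫ λ_ Y

theorem whiskerLeft_comp_eq_iff {Z Z' : b ⟶ t} {Y Y' : a ⟶ t}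
    (ρ : k ≫ Z ≅ r ≫ Y) (ρ' : k ≫ Z' ≅ r ≫ Y') (θ : Z ⟶ Z') (η : Y ⟶ Y') :
    i ◁ (ρ.hom ≫ r ◁ η) = i ◁ (k ◁ θ ≫ ρ'.hom) ↔
      (restrictIso ec ef ρ).hom ≫ η = f ◁ θ ≫ (restrictIso ec ef ρ').hom := by
  have hl : i ◁ (ρ.hom ≫ r ◁ η) = ((α_ i k Z).inv ≫ ef.hom ▷ Z) ≫
      ((restrictIso ec ef ρ).hom ≫ η) ≫ ((λ_ Y').inv ≫ ec.inv ▷ Y' ≫ (α_ i r Y').hom) := by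
    simp [restrictIso, whiskerLeft_whiskerLeft_eq_conj ec]
  have hr : i ◁ (k ◁ θ ≫ ρ'.hom) = ((α_ i k Z).inv ≫ ef.hom ▷ Z) ≫
      (f ◁ θ ≫ (restrictIso ec ef ρ').hom) ≫ ((λ_ Y').inv ≫ ec.inv ▷ Y' ≫ (α_ i r Y').hom) := by
    simp [restrictIso, whiskerLeft_whiskerLeft_eq_conj ef]
  rw [hl, hr, cancel_epi, cancel_mono]

theorem restrictIso_eq_of_whiskerLeft {Z : b ⟶ t} {Y : a ⟶ t} {ρ : k ≫ Z ≅ r ≫ Y}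
    {γ : f ≫ Z ≅ Y} (h : i ◁ ρ.hom = (α_ i k Z).inv ≫ ef.hom ▷ Z ≫ γ.hom ≫ (λ_ Y).inv ≫
      ec.inv ▷ Y ≫ (α_ i r Y).hom) :
    restrictIso ec ef ρ = γ := by
  ext
  simp [restrictIso, h]

theorem restrictIso_assocWhiskerRight {d : B} {u : b ⟶ d} {w : a ⟶ d} (ω : k ≫ u ≅ r ≫ w)
    (X : d ⟶ t) :
    restrictIso ec ef (assocWhiskerRight ω X) =
      (α_ f u X).symm ≪≫ whiskerRightIso (restrictIso ec ef ω) X := by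
  ext
  simp [restrictIso, assocWhiskerRight]

end Restrict

namespace IsBicatCoproduct

variable {a b s t : B} {ia : a ⟶ s} {ib : b ⟶ s}

theorem hom_ext (hcp : IsBicatCoproduct ia ib) {m m' : s ⟶ t} {ξ ξ' : m ⟶ m'}
    (ha : ia ◁ ξ = ia ◁ ξ') (hb : ib ◁ ξ = ib ◁ ξ') : ξ = ξ' := by
  obtain ⟨θ, -, uniq⟩ := (hcp t).2 m m' (ia ◁ ξ) (ib ◁ ξ)
  exact (uniq ξ ⟨rfl, rfl⟩).trans (uniq ξ' ⟨ha.symm, hb.symm⟩).symm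

theorem exists_iso (hcp : IsBicatCoproduct ia ib) {m m' : s ⟶ t}
    (φ : ia ≫ m ≅ ia ≫ m') (ψ : ib ≫ m ≅ ib ≫ m') :
    ∃ Θ : m ≅ m', ia ◁ Θ.hom = φ.hom ∧ ib ◁ Θ.hom = ψ.hom := by
  obtain ⟨θ, ⟨ha, hb⟩, -⟩ := (hcp t).2 m m' φ.hom ψ.hom
  obtain ⟨θ', ⟨ha', hb'⟩, -⟩ := (hcp t).2 m' m φ.inv ψ.inv
  refine ⟨⟨θ, θ', ?_, ?_⟩, ha, hb⟩
  · exact hcp.hom_ext (by simp [ha, ha']) (by simp [hb, hb'])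
  · exact hcp.hom_ext (by simp [ha, ha']) (by simp [hb, hb'])

end IsBicatCoproduct

theorem IsBicatCoproduct.exists_restrictIso_eq {a s b t : B} {i₁ i₂ : a ⟶ s} {r : s ⟶ a}
    {k : s ⟶ b} {f g : a ⟶ b} (hcp : IsBicatCoproduct i₁ i₂) (e₁ : i₁ ≫ r ≅ 𝟙 a)
    (e₂ : i₂ ≫ r ≅ 𝟙 a) (ef : i₁ ≫ k ≅ f) (eg : i₂ ≫ k ≅ g) {Z : b ⟶ t} {Y : a ⟶ t}
    (γ₁ : f ≫ Z ≅ Y) (γ₂ : g ≫ Z ≅ Y) :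
    ∃ ρ : k ≫ Z ≅ r ≫ Y, restrictIso e₁ ef ρ = γ₁ ∧ restrictIso e₂ eg ρ = γ₂ := by
  obtain ⟨ρ, h₁, h₂⟩ := hcp.exists_iso
    ((α_ i₁ k Z).symm ≪≫ whiskerRightIso ef Z ≪≫ γ₁ ≪≫ (λ_ Y).symm ≪≫
      whiskerRightIso e₁.symm Y ≪≫ α_ i₁ r Y)
    ((α_ i₂ k Z).symm ≪≫ whiskerRightIso eg Z ≪≫ γ₂ ≪≫ (λ_ Y).symm ≪≫
      whiskerRightIso e₂.symm Y ≪≫ α_ i₂ r Y)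
  exact ⟨ρ, restrictIso_eq_of_whiskerLeft e₁ ef (by simpa using h₁),
    restrictIso_eq_of_whiskerLeft e₂ eg (by simpa using h₂)⟩

section CodiagonalPushout

variable {a b s P : B} {f g : a ⟶ b} {i₁ i₂ : a ⟶ s} {k : s ⟶ b} {r : s ⟶ a} {u : b ⟶ P}
  {w : a ⟶ P} (e₁ : i₁ ≫ r ≅ 𝟙 a) (e₂ : i₂ ≫ r ≅ 𝟙 a) (ef : i₁ ≫ k ≅ f) (eg : i₂ ≫ k ≅ g)
  (ω : k ≫ u ≅ r ≫ w)

def codiagonalPushoutIso : f ≫ u ≅ g ≫ u :=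
  restrictIso e₁ ef ω ≪≫ (restrictIso e₂ eg ω).symm

theorem codiagonalPushoutIso_hom_whiskerRight {t : B} (X : P ⟶ t) :
    (α_ f u X).inv ≫ (codiagonalPushoutIso e₁ e₂ ef eg ω).hom ▷ X ≫ (α_ g u X).hom =
      (restrictIso e₁ ef (assocWhiskerRight ω X)).hom ≫
        (restrictIso e₂ eg (assocWhiskerRight ω X)).inv := by
  simp [codiagonalPushoutIso, restrictIso_assocWhiskerRight]

variable {e₁ e₂ ef eg ω}

theorem exists_desc_of_isBicatPushout_codiagonal (hcp : IsBicatCoproduct i₁ i₂)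
    (hpo : IsBicatPushout k r u w ω) {t : B} (q : b ⟶ t) (β : f ≫ q ≅ g ≫ q) :
    ∃ (h : P ⟶ t) (eu : u ≫ h ≅ q), β.hom = f ◁ eu.inv ≫ (α_ f u h).inv ≫
      (codiagonalPushoutIso e₁ e₂ ef eg ω).hom ▷ h ≫ (α_ g u h).hom ≫ g ◁ eu.hom := by
  obtain ⟨ρ, hρ₁, hρ₂⟩ := hcp.exists_restrictIso_eq e₁ e₂ ef eg (Iso.refl (f ≫ q)) β.symm
  obtain ⟨h, eu, ev, hρ⟩ := (hpo t).1 q (f ≫ q) ρ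
  have hρ' : (assocWhiskerRight ω h).hom ≫ r ◁ ev.hom = k ◁ eu.hom ≫ ρ.hom := by
    simp [hρ]
  have h₁ := (whiskerLeft_comp_eq_iff e₁ ef _ _ _ _).1 (congrArg (i₁ ◁ ·) hρ')
  have h₂ := (whiskerLeft_comp_eq_iff e₂ eg _ _ _ _).1 (congrArg (i₂ ◁ ·) hρ')
  rw [hρ₁] at h₁
  rw [hρ₂] at h₂
  have h₂' : (restrictIso e₂ eg (assocWhiskerRight ω h)).inv ≫ g ◁ eu.hom = ev.hom ≫ β.hom := by
    rw [Iso.inv_comp_eq, reassoc_of% h₂]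
    simp
  refine ⟨h, eu, ?_⟩
  rw [reassoc_of% codiagonalPushoutIso_hom_whiskerRight, h₂', reassoc_of% h₁]
  simp

theorem existsUnique_of_isBicatPushout_codiagonal (hcp : IsBicatCoproduct i₁ i₂)
    (hpo : IsBicatPushout k r u w ω) {t : B} (x y : P ⟶ t)
    (θ : u ≫ x ⟶ u ≫ y)
    (H : ((α_ f u x).inv ≫ (codiagonalPushoutIso e₁ e₂ ef eg ω).hom ▷ x ≫ (α_ g u x).hom) ≫
      g ◁ θ = f ◁ θ ≫
        ((α_ f u y).inv ≫ (codiagonalPushoutIso e₁ e₂ ef eg ω).hom ▷ y ≫ (α_ g u y).hom)) :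
    ∃! π : x ⟶ y, u ◁ π = θ := by
  set T₁ := fun X : P ⟶ t => restrictIso e₁ ef (assocWhiskerRight ω X)
  set T₂ := fun X : P ⟶ t => restrictIso e₂ eg (assocWhiskerRight ω X)
  have hH : f ◁ θ ≫ (T₁ y).hom = (T₁ x).hom ≫ (T₂ x).inv ≫ g ◁ θ ≫ (T₂ y).hom := by
    rw [codiagonalPushoutIso_hom_whiskerRight, codiagonalPushoutIso_hom_whiskerRight,
      ← Category.assoc (f ◁ θ)] at H
    simpa using (Iso.comp_inv_eq _).1 H.symm
  set θw := (T₁ x).inv ≫ f ◁ θ ≫ (T₁ y).hom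
  have h₁ : (T₁ x).hom ≫ θw = f ◁ θ ≫ (T₁ y).hom := by simp [θw]
  have h₂ : (T₂ x).hom ≫ θw = g ◁ θ ≫ (T₂ y).hom := by simp [θw, hH]
  have compat : (assocWhiskerRight ω x).hom ≫ r ◁ θw = k ◁ θ ≫ (assocWhiskerRight ω y).hom :=
    hcp.hom_ext ((whiskerLeft_comp_eq_iff e₁ ef _ _ _ _).2 h₁)
      ((whiskerLeft_comp_eq_iff e₂ eg _ _ _ _).2 h₂)
  obtain ⟨π, ⟨hπu, -⟩, huniq⟩ := (hpo t).2 x y θ θw compat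
  refine ⟨π, hπu, fun π' hπ' => huniq π' ⟨hπ', ?_⟩⟩
  -- `θw` is forced: the restriction of `ω ▷ X` is natural in `X`.
  rw [Iso.eq_inv_comp, ← hπ']
  simp only [T₁, restrictIso_assocWhiskerRight, Iso.trans_hom, Iso.symm_hom,
    whiskerRightIso_hom, Category.assoc]
  rw [← whisker_exchange, associator_inv_naturality_right_assoc]

variable (e₁ e₂ ef eg) in
theorem isBicatCoequalizer_of_isBicatPushout_codiagonal (hcp : IsBicatCoproduct i₁ i₂)
    (hpo : IsBicatPushout k r u w ω) :
    IsBicatCoequalizer f g u (codiagonalPushoutIso e₁ e₂ ef eg ω) := fun _ =>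
  ⟨exists_desc_of_isBicatPushout_codiagonal hcp hpo,
    existsUnique_of_isBicatPushout_codiagonal hcp hpo⟩

end CodiagonalPushout

/-- a bicategory with binary bicategorical coproducts and bicategorical
pushouts has bicategorical coequalizers, given by pushing out `(f,g) : a ⊔ a ⟶ b`
along the codiagonal `∇ : a ⊔ a ⟶ a`. -/
theorem bicat_coequalizer_of_coproducts_and_pushouts
    (hcoprod : ∀ a b : B, ∃ (s : B) (ia : a ⟶ s) (ib : b ⟶ s), IsBicatCoproduct ia ib)
    (hpush : ∀ {x y z : B} (f : x ⟶ y) (g : x ⟶ z),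
      ∃ (s : B) (iy : y ⟶ s) (iz : z ⟶ s) (w : f ≫ iy ≅ g ≫ iz),
        IsBicatPushout f g iy iz w) :
    -- bicategorical coequalizers exist:
    (∀ {a b : B} (f g : a ⟶ b),
      ∃ (c : B) (p : b ⟶ c) (w : f ≫ p ≅ g ≫ p), IsBicatCoequalizer f g p w) ∧
    -- specifically: given a coproduct `a ⊔ a`, a morphism `(f,g)`, a codiagonal `∇`
    -- and a pushout of `(f,g)` along `∇`, the leg from `b` is a coequalizer of `f, g`:
    (∀ {a b s P : B} (f g : a ⟶ b) (i₁ i₂ : a ⟶ s) (k : s ⟶ b) (covd : s ⟶ a)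
      (u : b ⟶ P) (w : a ⟶ P) (ω : k ≫ u ≅ covd ≫ w),
      IsBicatCoproduct i₁ i₂ →
      Nonempty (i₁ ≫ k ≅ f) → Nonempty (i₂ ≫ k ≅ g) →
      Nonempty (i₁ ≫ covd ≅ 𝟙 a) → Nonempty (i₂ ≫ covd ≅ 𝟙 a) →
      IsBicatPushout k covd u w ω →
      ∃ e : f ≫ u ≅ g ≫ u, IsBicatCoequalizer f g u e) := by
  refine ⟨fun {a b} f g => ?_, ?_⟩
  · obtain ⟨s, i₁, i₂, hcp⟩ := hcoprod a a
    obtain ⟨k, ⟨ef⟩, ⟨eg⟩⟩ := (hcp b).1 f g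
    obtain ⟨covd, ⟨e₁⟩, ⟨e₂⟩⟩ := (hcp a).1 (𝟙 a) (𝟙 a)
    obtain ⟨P, u, w, ω, hpo⟩ := hpush k covd
    exact ⟨P, u, _, isBicatCoequalizer_of_isBicatPushout_codiagonal e₁ e₂ ef eg hcp hpo⟩
  · rintro a b s P f g i₁ i₂ k covd u w ω hcp ⟨ef⟩ ⟨eg⟩ ⟨e₁⟩ ⟨e₂⟩ hpo
    exact ⟨_, isBicatCoequalizer_of_isBicatPushout_codiagonal e₁ e₂ ef eg hcp hpo⟩
end

section
/- Let a bicategory have bicategorical coinserters and (multiple) bicategorical coequifiers. Then it has bicategorical coinverters: given f, g : A ⇉ B and a 2-cell α : f → g, form the bicategorical coinserter (p : B → C, β : p∘g → p∘f) of the pair (g, f), then form the multiple bicategorical coequifier q : C → D of the pairs ((p∘α) ∘ β, id_{p∘g}) and (β ∘ (p∘α), id_{p∘f}); then q ∘ p : B → D, equipped with q∘(p∘α), is a bicategorical coinverter of α. -/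
/-!
Statement 8: In a bicategory with bicategorical coinserters and (multiple) bicategorical
coequifiers, bicategorical coinverters exist: given `f, g : a ⟶ b` and a 2-cell
`η : f ⟶ g`, form the bicategorical coinserter `(p : b ⟶ c, β : g ≫ p ⟶ f ≫ p)` of
`(g, f)`, then the multiple bicategorical coequifier `q : c ⟶ d` of the pairs
`(β ≫ (η ▷ p), 𝟙 (g ≫ p))` and `((η ▷ p) ≫ β, 𝟙 (f ≫ p))`; then `p ≫ q` is a
bicategorical coinverter of `η`.
-/

open CategoryTheory Bicategory

universe w v u

variable {B : Type u} [Bicategory.{w, v} B]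

/-- `(p, α)` is a bicategorical coinserter of `f, g : a ⟶ b`: for every `t`,
precomposition induces an equivalence between `Hom(c,t)` and the category of pairs
`(q : b ⟶ t, β : f ≫ q ⟶ g ≫ q)`. -/
def IsBicatCoinserter {a b c : B} (f g : a ⟶ b) (p : b ⟶ c) (α : f ≫ p ⟶ g ≫ p) : Prop :=
  ∀ t : B,
    (∀ (q : b ⟶ t) (β : f ≫ q ⟶ g ≫ q),
      ∃ (k : c ⟶ t) (e : p ≫ k ≅ q),
        β = f ◁ e.inv ≫ (α_ f p k).inv ≫ α ▷ k ≫ (α_ g p k).hom ≫ g ◁ e.hom) ∧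
    (∀ (k l : c ⟶ t) (θ : p ≫ k ⟶ p ≫ l),
      ((α_ f p k).inv ≫ α ▷ k ≫ (α_ g p k).hom) ≫ g ◁ θ =
        f ◁ θ ≫ ((α_ f p l).inv ≫ α ▷ l ≫ (α_ g p l).hom) →
      ∃! π : k ⟶ l, p ◁ π = θ)

/-- `q` is a multiple bicategorical coequifier of the two parallel pairs of 2-cells
`(φ₁, ψ₁)` and `(φ₂, ψ₂)` with common target `b`. -/
def IsBicatCoequifierPair {a₁ a₂ b c : B} {f₁ g₁ : a₁ ⟶ b} (φ₁ ψ₁ : f₁ ⟶ g₁)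
    {f₂ g₂ : a₂ ⟶ b} (φ₂ ψ₂ : f₂ ⟶ g₂) (q : b ⟶ c) : Prop :=
  φ₁ ▷ q = ψ₁ ▷ q ∧ φ₂ ▷ q = ψ₂ ▷ q ∧
  ∀ t : B,
    (∀ r : b ⟶ t, φ₁ ▷ r = ψ₁ ▷ r → φ₂ ▷ r = ψ₂ ▷ r →
      ∃ k : c ⟶ t, Nonempty (q ≫ k ≅ r)) ∧
    (∀ (k l : c ⟶ t) (θ : q ≫ k ⟶ q ≫ l), ∃! π : k ⟶ l, q ◁ π = θ)

/-- `p` is a bicategorical coinverter of the 2-cell `η : f ⟶ g`: `η ▷ p` is invertible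
and `p` is universal with this property. -/
def IsBicatCoinverter {a b c : B} {f g : a ⟶ b} (η : f ⟶ g) (p : b ⟶ c) : Prop :=
  IsIso (η ▷ p) ∧
  ∀ t : B,
    (∀ r : b ⟶ t, IsIso (η ▷ r) → ∃ k : c ⟶ t, Nonempty (p ≫ k ≅ r)) ∧
    (∀ (k l : c ⟶ t) (θ : p ≫ k ⟶ p ≫ l), ∃! π : k ⟶ l, p ◁ π = θ)

/-!
The coequifier equations say precisely that `β` becomes a two-sided inverse of `η ▷ p` after
whiskering by `q`, so `p ≫ q` inverts `η`. A morphism `r` inverting `η` factors through `p` by the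
coinserter applied to `inv (η ▷ r)`; the factorisation `k` then inverts `η ▷ p` with inverse
`β ▷ k`, so it coequifies both pairs and factors through `q`. A 2-cell between morphisms out of
`p ≫ q` is automatically compatible with `β`, being compatible with its inverse `η` by the
interchange law; hence it lifts uniquely along `p` and then along `q`.
-/

section

variable {a b c d t : B} {f g : a ⟶ b}

theorem whiskerRight_comp_eq_of_whiskerRight_eq {x y : a ⟶ b} {φ ψ : x ⟶ y} {q : b ⟶ c}
    (h : φ ▷ q = ψ ▷ q) (m : c ⟶ t) : φ ▷ (q ≫ m) = ψ ▷ (q ≫ m) := by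
  rw [whiskerRight_comp, h, ← whiskerRight_comp]

theorem whiskerRight_eq_of_iso (η : f ⟶ g) {x r : b ⟶ t} (e : x ≅ r) :
    η ▷ x = f ◁ e.hom ≫ η ▷ r ≫ g ◁ e.inv := by
  rw [← Category.assoc, whisker_exchange, Category.assoc, ← whiskerLeft_comp, e.hom_inv_id,
    whiskerLeft_id, Category.comp_id]

theorem inverse_whisker_exchange (η : f ⟶ g) {x y : b ⟶ t} (θ : x ⟶ y)
    {γx : g ≫ x ⟶ f ≫ x} {γy : g ≫ y ⟶ f ≫ y} (hx : γx ≫ η ▷ x = 𝟙 _)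
    (hy : η ▷ y ≫ γy = 𝟙 _) : γx ≫ f ◁ θ = g ◁ θ ≫ γy :=
  calc γx ≫ f ◁ θ = γx ≫ (f ◁ θ ≫ η ▷ y) ≫ γy := by simp [hy]
    _ = (γx ≫ η ▷ x) ≫ g ◁ θ ≫ γy := by simp [whisker_exchange]
    _ = g ◁ θ ≫ γy := by simp [hx]

theorem whiskerRight_inverse_iff {p : b ⟶ c} (η : f ⟶ g) (β : g ≫ p ⟶ f ≫ p) (n : c ⟶ t) :
    ((β ≫ η ▷ p) ▷ n = 𝟙 _ ▷ n ∧ (η ▷ p ≫ β) ▷ n = 𝟙 _ ▷ n) ↔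
      ((α_ g p n).inv ≫ β ▷ n ≫ (α_ f p n).hom) ≫ η ▷ (p ≫ n) = 𝟙 _ ∧
        η ▷ (p ≫ n) ≫ (α_ g p n).inv ≫ β ▷ n ≫ (α_ f p n).hom = 𝟙 _ := by
  simp [whiskerRight_comp, Iso.inv_comp_eq, ← cancel_mono (α_ _ _ _).inv]

theorem coequifies_of_inv_whiskerRight_eq {p : b ⟶ c} {k : c ⟶ t} {r : b ⟶ t} (η : f ⟶ g)
    (β : g ≫ p ⟶ f ≫ p) [IsIso (η ▷ r)] (e : p ≫ k ≅ r)
    (he : inv (η ▷ r) = g ◁ e.inv ≫ (α_ g p k).inv ≫ β ▷ k ≫ (α_ f p k).hom ≫ f ◁ e.hom) :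
    (β ≫ η ▷ p) ▷ k = 𝟙 _ ▷ k ∧ (η ▷ p ≫ β) ▷ k = 𝟙 _ ▷ k := by
  have hβ : (α_ g p k).inv ≫ β ▷ k ≫ (α_ f p k).hom = g ◁ e.hom ≫ inv (η ▷ r) ≫ f ◁ e.inv := by
    simp [he]
  rw [whiskerRight_inverse_iff, whiskerRight_eq_of_iso η e, hβ]
  simp

theorem existsUnique_comp_whiskerLeft {p : b ⟶ c} {q : c ⟶ d} {k l : d ⟶ t}
    (θ : (p ≫ q) ≫ k ⟶ (p ≫ q) ≫ l)
    (hp : ∃! σ : q ≫ k ⟶ q ≫ l, p ◁ σ = (α_ p q k).inv ≫ θ ≫ (α_ p q l).hom)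
    (hq : ∀ σ : q ≫ k ⟶ q ≫ l, ∃! π : k ⟶ l, q ◁ π = σ) :
    ∃! π : k ⟶ l, (p ≫ q) ◁ π = θ := by
  obtain ⟨σ, hσ, hσ_unique⟩ := hp
  obtain ⟨π, hπ, hπ_unique⟩ := hq σ
  refine ⟨π, by simp [comp_whiskerLeft, hπ, hσ], fun π' hπ' => hπ_unique π' (hσ_unique _ ?_)⟩
  simp [← hπ', comp_whiskerLeft]

end

/-- coinverters from coinserters and coequifiers, by the explicit two-step
construction. -/
theorem bicat_coinverter_of_coinserter_and_coequifier
    {a b c d : B} {f g : a ⟶ b} (η : f ⟶ g) (p : b ⟶ c) (β : g ≫ p ⟶ f ≫ p)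
    (hins : IsBicatCoinserter g f p β) (q : c ⟶ d)
    (hequi : IsBicatCoequifierPair (β ≫ η ▷ p) (𝟙 (g ≫ p)) (η ▷ p ≫ β) (𝟙 (f ≫ p)) q) :
    IsBicatCoinverter η (p ≫ q) := by
  obtain ⟨hq₁, hq₂, hcoequi⟩ := hequi
  have inverse := fun (t : B) (m : d ⟶ t) => (whiskerRight_inverse_iff η β (q ≫ m)).1
    ⟨whiskerRight_comp_eq_of_whiskerRight_eq hq₁ m, whiskerRight_comp_eq_of_whiskerRight_eq hq₂ m⟩
  refine ⟨?_, fun t => ⟨fun r hr => ?_, fun k l θ => ?_⟩⟩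
  · obtain ⟨hinv_hom, hhom_inv⟩ := (whiskerRight_inverse_iff η β q).1 ⟨hq₁, hq₂⟩
    exact ⟨_, hhom_inv, hinv_hom⟩
  · obtain ⟨k, e, he⟩ := (hins t).1 r (inv (η ▷ r))
    obtain ⟨hk₁, hk₂⟩ := coequifies_of_inv_whiskerRight_eq η β e he
    obtain ⟨k', ⟨e'⟩⟩ := (hcoequi t).1 k hk₁ hk₂
    exact ⟨k', ⟨α_ p q k' ≪≫ whiskerLeftIso p e' ≪≫ e⟩⟩
  · obtain ⟨hk, -⟩ := inverse t k
    obtain ⟨-, hl⟩ := inverse t l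
    exact existsUnique_comp_whiskerLeft θ ((hins t).2 _ _ _ (inverse_whisker_exchange η _ hk hl))
      ((hcoequi t).2 k l)
end
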